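/- arXiv:1610.00228 — 7 statements merged into one kernel-verified Lean document; each statement's English description precedes it below -/
import Mathlib

section
/- For the ERK(2,2) family with parameter α ∈ [1/2, 1], each of the polynomials P₀(x,y,v) = 1 − (1 − 1/(2α))y − v/(2α) + yv/2, P₁(x,y,v) = (1 − 1/(2α))y + v/(2α) − xv/2 − yv/2, and P₂(x,y,v) = xv/2 is non-negative for all (x,y,v) ∈ [0,1]³. -/
/-!
Write `b = 1/(2α)`, the second weight of the tableau; `α ∈ [1/2, 1]` means `b ∈ [1/2, 1]`.
Then `P₀ = (1 - b)(1 - y) + b(1 - v) + yv/2` and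
`P₁ = (1 - b)y(1 - v) + (1 - b)v(1 - x) + (b - 1/2)v(2 - x - y)`,
sums of products of factors that are non-negative on the unit cube.
-/

open Set

lemma one_div_two_mul_mem_Icc {α : ℝ} (hα1 : 1/2 ≤ α) (hα2 : α ≤ 1) :
    1/(2*α) ∈ Icc (1/2 : ℝ) 1 := by
  have hpos : (0:ℝ) < 2*α := by linarith
  constructor
  · rw [div_le_div_iff₀ two_pos hpos]; linarith
  · rw [div_le_one hpos]; linarith

section Erk22

variable {b x y v : ℝ}

lemma erk22_P₀_nonneg (hb : b ∈ Icc (0:ℝ) 1) (hy : y ∈ Icc (0:ℝ) 1) (hv : v ∈ Icc (0:ℝ) 1) :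
    0 ≤ 1 - (1 - b)*y - b*v + y*v/2 := by
  obtain ⟨hb0, hb1⟩ := hb
  obtain ⟨hy0, hy1⟩ := hy
  obtain ⟨hv0, hv1⟩ := hv
  linarith [mul_nonneg (sub_nonneg.2 hb1) (sub_nonneg.2 hy1),
    mul_nonneg hb0 (sub_nonneg.2 hv1), mul_nonneg hy0 hv0]

lemma erk22_P₁_nonneg (hb : b ∈ Icc (1/2:ℝ) 1) (hx : x ∈ Icc (0:ℝ) 1) (hy : y ∈ Icc (0:ℝ) 1)
    (hv : v ∈ Icc (0:ℝ) 1) :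
    0 ≤ (1 - b)*y + b*v - x*v/2 - y*v/2 := by
  obtain ⟨hb0, hb1⟩ := hb
  obtain ⟨hx0, hx1⟩ := hx
  obtain ⟨hy0, hy1⟩ := hy
  obtain ⟨hv0, hv1⟩ := hv
  linarith [mul_nonneg (mul_nonneg (sub_nonneg.2 hb1) hy0) (sub_nonneg.2 hv1),
    mul_nonneg (mul_nonneg (sub_nonneg.2 hb1) hv0) (sub_nonneg.2 hx1),
    mul_nonneg (mul_nonneg (sub_nonneg.2 hb0) hv0) (by linarith : (0:ℝ) ≤ 2 - x - y)]

end Erk22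

theorem erk22_mid_alpha_nonneg (α : ℝ) (hα1 : 1/2 ≤ α) (hα2 : α ≤ 1)
    (x y v : ℝ) (hx : x ∈ Set.Icc (0:ℝ) 1) (hy : y ∈ Set.Icc (0:ℝ) 1)
    (hv : v ∈ Set.Icc (0:ℝ) 1) :
    0 ≤ 1 - (1 - 1/(2*α))*y - v/(2*α) + y*v/2 ∧
    0 ≤ (1 - 1/(2*α))*y + v/(2*α) - x*v/2 - y*v/2 ∧
    0 ≤ x*v/2 := by
  have hb := one_div_two_mul_mem_Icc hα1 hα2
  rw [← one_div_mul_eq_div (2*α) v]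
  exact ⟨erk22_P₀_nonneg (Icc_subset_Icc_left (by norm_num) hb) hy hv,
    erk22_P₁_nonneg hb hx hy hv, div_nonneg (mul_nonneg hx.1 hv.1) zero_le_two⟩
end

section
/- For any α ∈ [1/2, 1] and any ε > 0, the polynomial P₁(x,y,v) = (1 − 1/(2α))y + v/(2α) − xv/2 − yv/2 satisfies 2·P₁(1, 1+ε, 1+ε) = −ε(1+ε) < 0; hence the positivity step-size coefficient of ERK(2,2) methods with α ∈ [1/2, 1] is exactly 1. -/
theorem erk22_mid_alpha_sharp_general (α ε : ℝ) (hε : 0 < ε) :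
    2 * ((1 - 1/(2*α))*(1+ε) + (1+ε)/(2*α) - 1*(1+ε)/2 - (1+ε)*(1+ε)/2)
      = -ε*(1+ε) ∧ -ε*(1+ε) < 0 := by
  -- The weights `1 - 1/(2α)` and `1/(2α)` sum to one, so `α` cancels.
  refine ⟨by ring, ?_⟩
  have : 0 < ε * (1 + ε) := by positivity
  linarith

theorem erk22_mid_alpha_sharp (α ε : ℝ) (hα1 : 1/2 ≤ α) (hα2 : α ≤ 1) (hε : 0 < ε) :
    2 * ((1 - 1/(2*α))*(1+ε) + (1+ε)/(2*α) - 1*(1+ε)/2 - (1+ε)*(1+ε)/2)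
      = -ε*(1+ε) ∧ -ε*(1+ε) < 0 :=
  erk22_mid_alpha_sharp_general α ε hε
end

section
/- For the ERK(2,2) family with parameter α > 1, each of the polynomials P₀(x,y,v) = 1 − (1 − 1/(2α))y − v/(2α) + yv/2, P₁(x,y,v) = (1 − 1/(2α))y + v/(2α) − xv/2 − yv/2, and P₂(x,y,v) = xv/2 is non-negative for all (x,y,v) ∈ [0, 1/α]³. -/
/-!
Write `h = 1/α ∈ (0, 1)`. On `[0, h]³` the first two polynomials split into products of
non-negative factors:
`P₀ = (1 - y)(1 - v/2) + h y/2 + (1 - h) v/2` and `P₁ = y (1 - (h + v)/2) + v (h - x)/2`.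
-/

open Set

theorem erk22_poly_zero_nonneg {h y v : ℝ} (hh : h ≤ 1) (hy : y ∈ Icc 0 h) (hv : v ∈ Icc 0 h) :
    0 ≤ 1 - (1 - h / 2) * y - h * v / 2 + y * v / 2 := by
  have hyv : 0 ≤ (1 - y) * (1 - v / 2) := mul_nonneg (by linarith [hy.2]) (by linarith [hv.2])
  have hhy : 0 ≤ h * y := mul_nonneg (hy.1.trans hy.2) hy.1
  have hhv : 0 ≤ (1 - h) * v := mul_nonneg (by linarith) hv.1
  linear_combination hyv + hhy / 2 + hhv / 2

theorem erk22_poly_one_nonneg {h x y v : ℝ} (hh : h ≤ 1) (hx : x ≤ h) (hy : 0 ≤ y)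
    (hv : v ∈ Icc 0 h) : 0 ≤ (1 - h / 2) * y + h * v / 2 - x * v / 2 - y * v / 2 := by
  have hyhv : 0 ≤ y * (1 - (h + v) / 2) := mul_nonneg hy (by linarith [hv.2])
  have hvhx : 0 ≤ v * (h - x) := mul_nonneg hv.1 (by linarith)
  linear_combination hyhv + hvhx / 2

theorem erk22_large_alpha_nonneg (α : ℝ) (hα : 1 < α)
    (x y v : ℝ) (hx : x ∈ Set.Icc (0:ℝ) (1/α)) (hy : y ∈ Set.Icc (0:ℝ) (1/α))
    (hv : v ∈ Set.Icc (0:ℝ) (1/α)) :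
    0 ≤ 1 - (1 - 1/(2*α))*y - v/(2*α) + y*v/2 ∧
    0 ≤ (1 - 1/(2*α))*y + v/(2*α) - x*v/2 - y*v/2 ∧
    0 ≤ x*v/2 := by
  have hstep : 1 / α ≤ 1 := (div_lt_one (by linarith)).2 hα |>.le
  have hcoef : 1 / (2 * α) = 1 / α / 2 := by ring
  have hvcoef : v / (2 * α) = 1 / α * v / 2 := by ring
  rw [hcoef, hvcoef]
  exact ⟨erk22_poly_zero_nonneg hstep hy hv, erk22_poly_one_nonneg hstep hx.2 hy.1 hv,
    div_nonneg (mul_nonneg hx.1 hv.1) zero_le_two⟩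
end

section
/- For every α ∈ [1/2, 3/4] and all (x,y,z,u,v,w) ∈ [0,1]⁶, the quantity 12·P₀ = 12αv − 2vwz + 3vw − 8αvz + 6vz − 9v − 12αw + 8αwz − 3wz − 3z + 12 is non-negative. -/
/-!
`12 P₀` is affine in `α`, hence a convex combination of its values at `α = 1/2` and `α = 3/4`.
At each endpoint it is a sum of products of the nonnegative quantities
`z, v, w, 1 - z, 1 - v, 1 - w, 3 - 2z, 3 - 2w`.
-/

namespace ERK33CaseII

/-- `12 P₀` of the Case II family. -/
def p0 (α z v w : ℝ) : ℝ :=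
  12*α*v - 2*v*w*z + 3*v*w - 8*α*v*z + 6*v*z - 9*v - 12*α*w + 8*α*w*z
    - 3*w*z - 3*z + 12

theorem p0_eq_convex_combination (α z v w : ℝ) :
    p0 α z v w = (3 - 4*α) * p0 (1/2) z v w + (4*α - 2) * p0 (3/4) z v w := by
  unfold p0; ring

theorem p0_half_eq (z v w : ℝ) :
    p0 (1/2) z v w = 3*(1 - v) + 6*(1 - w) + 3*(1 - z) + 3*v*w + w*z + 2*v*z*(1 - w) := by
  unfold p0; ring

theorem p0_threeQuarters_eq (z v w : ℝ) :
    p0 (3/4) z v w = 3*(1 - w)*(1 - z) + 3*(3 - 2*w) + v*w*(3 - 2*z) := by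
  unfold p0; ring

variable {z v w : ℝ}

theorem p0_half_nonneg (hz : z ∈ Set.Icc (0:ℝ) 1) (hv : v ∈ Set.Icc (0:ℝ) 1)
    (hw : w ∈ Set.Icc (0:ℝ) 1) : 0 ≤ p0 (1/2) z v w := by
  have h1w : 0 ≤ 1 - w := sub_nonneg.2 hw.2
  rw [p0_half_eq]
  linarith [hv.2, hw.2, hz.2, mul_nonneg hv.1 hw.1, mul_nonneg hw.1 hz.1,
    mul_nonneg (mul_nonneg hv.1 hz.1) h1w]

theorem p0_threeQuarters_nonneg (hz : z ∈ Set.Icc (0:ℝ) 1) (hv : v ∈ Set.Icc (0:ℝ) 1)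
    (hw : w ∈ Set.Icc (0:ℝ) 1) : 0 ≤ p0 (3/4) z v w := by
  have h1w : 0 ≤ 1 - w := sub_nonneg.2 hw.2
  have h1z : 0 ≤ 1 - z := sub_nonneg.2 hz.2
  have h3z : 0 ≤ 3 - 2*z := by linarith [hz.2]
  rw [p0_threeQuarters_eq]
  linarith [hw.2, mul_nonneg h1w h1z, mul_nonneg (mul_nonneg hv.1 hw.1) h3z]

theorem p0_nonneg {α : ℝ} (hα : α ∈ Set.Icc (1/2 : ℝ) (3/4)) (hz : z ∈ Set.Icc (0:ℝ) 1)
    (hv : v ∈ Set.Icc (0:ℝ) 1) (hw : w ∈ Set.Icc (0:ℝ) 1) : 0 ≤ p0 α z v w := by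
  rw [p0_eq_convex_combination]
  have hlo : 0 ≤ 3 - 4*α := by linarith [hα.2]
  have hhi : 0 ≤ 4*α - 2 := by linarith [hα.1]
  exact add_nonneg (mul_nonneg hlo (p0_half_nonneg hz hv hw))
    (mul_nonneg hhi (p0_threeQuarters_nonneg hz hv hw))

end ERK33CaseII

theorem erk33_caseII_P0_nonneg_general (α : ℝ) (hα1 : 1/2 ≤ α) (hα2 : α ≤ 3/4)
    (z v w : ℝ)
    (hz : z ∈ Set.Icc (0:ℝ) 1)
    (hv : v ∈ Set.Icc (0:ℝ) 1) (hw : w ∈ Set.Icc (0:ℝ) 1) :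
    0 ≤ 12*α*v - 2*v*w*z + 3*v*w - 8*α*v*z + 6*v*z - 9*v - 12*α*w + 8*α*w*z
        - 3*w*z - 3*z + 12 :=
  ERK33CaseII.p0_nonneg ⟨hα1, hα2⟩ hz hv hw

theorem erk33_caseII_P0_nonneg (α : ℝ) (hα1 : 1/2 ≤ α) (hα2 : α ≤ 3/4)
    (x y z u v w : ℝ)
    (hx : x ∈ Set.Icc (0:ℝ) 1) (hy : y ∈ Set.Icc (0:ℝ) 1) (hz : z ∈ Set.Icc (0:ℝ) 1)
    (hu : u ∈ Set.Icc (0:ℝ) 1) (hv : v ∈ Set.Icc (0:ℝ) 1) (hw : w ∈ Set.Icc (0:ℝ) 1) :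
    0 ≤ 12*α*v - 2*v*w*z + 3*v*w - 8*α*v*z + 6*v*z - 9*v - 12*α*w + 8*α*w*z
        - 3*w*z - 3*z + 12 :=
  erk33_caseII_P0_nonneg_general α hα1 hα2 z v w hz hv hw
end

section
/- For every α ∈ [1/2, 3/4] and all (x,y,z,u,v,w) ∈ [0,1]⁶, the quantity 12·P₁ = [−12αv + 8αvy − 6vy + 8αvz − 6vz + 9v + 3z] + w·[12α + 2uy − 3u + 2vy + 2vz − 3v − 8αy + 3y − 8αz + 3z] is non-negative; in fact each of the two bracketed expressions is separately non-negative. -/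
/-!
Both brackets are affine in each of `u, v, y, z` separately, so on the unit box they are
convex combinations of their values at the vertices. Those values are affine in `α`
(such as `9 - 12α`, `4α - 1`, `6 - 4α`) and nonnegative on `[1/2, 3/4]`.
-/

open Set

theorem convex_comb_nonneg {p q t : ℝ} (ht : t ∈ Icc (0 : ℝ) 1) (hp : 0 ≤ p) (hq : 0 ≤ q) :
    0 ≤ (1 - t) * p + t * q :=
  add_nonneg (mul_nonneg (sub_nonneg.2 ht.2) hp) (mul_nonneg ht.1 hq)

theorem bilinear_interp_nonneg {y z a b c d : ℝ} (hy : y ∈ Icc (0 : ℝ) 1)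
    (hz : z ∈ Icc (0 : ℝ) 1) (ha : 0 ≤ a) (hb : 0 ≤ b) (hc : 0 ≤ c) (hd : 0 ≤ d) :
    0 ≤ (1 - y) * (1 - z) * a + y * (1 - z) * b + (1 - y) * z * c + y * z * d := by
  have h := convex_comb_nonneg hy (convex_comb_nonneg hz ha hc) (convex_comb_nonneg hz hb hd)
  linear_combination h

theorem erk33_caseII_P1_wConst_nonneg {α y z v : ℝ} (hα1 : 1/2 ≤ α) (hα2 : α ≤ 3/4)
    (hy : y ∈ Icc (0 : ℝ) 1) (hz : z ∈ Icc (0 : ℝ) 1) (hv : v ∈ Icc (0 : ℝ) 1) :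
    0 ≤ -12*α*v + 8*α*v*y - 6*v*y + 8*α*v*z - 6*v*z + 9*v + 3*z := by
  have at_v1 := bilinear_interp_nonneg (a := 9 - 12*α) (b := 3 - 4*α) (c := 6 - 4*α)
    (d := 4*α) hy hz (by linarith) (by linarith) (by linarith) (by linarith)
  have h := convex_comb_nonneg hv (by linarith [hz.1] : 0 ≤ 3*z) at_v1
  linear_combination h

theorem erk33_caseII_P1_wCoeff_nonneg {α y z u v : ℝ} (hα1 : 1/2 ≤ α) (hα2 : α ≤ 3/4)
    (hy : y ∈ Icc (0 : ℝ) 1) (hz : z ∈ Icc (0 : ℝ) 1) (hu : u ∈ Icc (0 : ℝ) 1)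
    (hv : v ∈ Icc (0 : ℝ) 1) :
    0 ≤ 12*α + 2*u*y - 3*u + 2*v*y + 2*v*z - 3*v - 8*α*y + 3*y - 8*α*z + 3*z := by
  -- the bracket decreases in `u`; its excess over the value at `u = 1` is `(1 - u) * (3 - 2y)`
  have excess_u : 0 ≤ (1 - u) * (3 - 2*y) :=
    mul_nonneg (sub_nonneg.2 hu.2) (by linarith [hy.2])
  have at_v0 := bilinear_interp_nonneg (a := 12*α - 3) (b := 4*α + 2) (c := 4*α)
    (d := 5 - 4*α) hy hz (by linarith) (by linarith) (by linarith) (by linarith)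
  have at_v1 := bilinear_interp_nonneg (a := 12*α - 6) (b := 4*α + 1) (c := 4*α - 1)
    (d := 6 - 4*α) hy hz (by linarith) (by linarith) (by linarith) (by linarith)
  have h := convex_comb_nonneg hv at_v0 at_v1
  linear_combination excess_u + h

theorem erk33_caseII_P1_nonneg_general (α : ℝ) (hα1 : 1/2 ≤ α) (hα2 : α ≤ 3/4)
    (y z u v w : ℝ)
    (hy : y ∈ Set.Icc (0:ℝ) 1) (hz : z ∈ Set.Icc (0:ℝ) 1)
    (hu : u ∈ Set.Icc (0:ℝ) 1) (hv : v ∈ Set.Icc (0:ℝ) 1) (hw : w ∈ Set.Icc (0:ℝ) 1) :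
    0 ≤ -12*α*v + 8*α*v*y - 6*v*y + 8*α*v*z - 6*v*z + 9*v + 3*z ∧
    0 ≤ 12*α + 2*u*y - 3*u + 2*v*y + 2*v*z - 3*v - 8*α*y + 3*y - 8*α*z + 3*z ∧
    0 ≤ (-12*α*v + 8*α*v*y - 6*v*y + 8*α*v*z - 6*v*z + 9*v + 3*z) +
        w*(12*α + 2*u*y - 3*u + 2*v*y + 2*v*z - 3*v - 8*α*y + 3*y - 8*α*z + 3*z) := by
  have hConst := erk33_caseII_P1_wConst_nonneg hα1 hα2 hy hz hv
  have hCoeff := erk33_caseII_P1_wCoeff_nonneg hα1 hα2 hy hz hu hv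
  exact ⟨hConst, hCoeff, add_nonneg hConst (mul_nonneg hw.1 hCoeff)⟩

theorem erk33_caseII_P1_nonneg (α : ℝ) (hα1 : 1/2 ≤ α) (hα2 : α ≤ 3/4)
    (x y z u v w : ℝ)
    (hx : x ∈ Set.Icc (0:ℝ) 1) (hy : y ∈ Set.Icc (0:ℝ) 1) (hz : z ∈ Set.Icc (0:ℝ) 1)
    (hu : u ∈ Set.Icc (0:ℝ) 1) (hv : v ∈ Set.Icc (0:ℝ) 1) (hw : w ∈ Set.Icc (0:ℝ) 1) :
    0 ≤ -12*α*v + 8*α*v*y - 6*v*y + 8*α*v*z - 6*v*z + 9*v + 3*z ∧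
    0 ≤ 12*α + 2*u*y - 3*u + 2*v*y + 2*v*z - 3*v - 8*α*y + 3*y - 8*α*z + 3*z ∧
    0 ≤ (-12*α*v + 8*α*v*y - 6*v*y + 8*α*v*z - 6*v*z + 9*v + 3*z) +
        w*(12*α + 2*u*y - 3*u + 2*v*y + 2*v*z - 3*v - 8*α*y + 3*y - 8*α*z + 3*z) :=
  erk33_caseII_P1_nonneg_general α hα1 hα2 y z u v w hy hz hu hv hw
end

section
/- For every α ∈ [1/2, 3/4] and all (x,y,z,u,v,w) ∈ [0,1]⁶, the quantity 12·P₂ = (3 − 2x)uw − 2uwy − 2vwy − 8αvy + 6vy + 8αwy − 3wy is non-negative. -/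
/-!
The polynomial is affine in each variable, and at the extreme face `x = y = 1` it reduces to
`Q = -u w - 2 v w + (6 - 8α) v + (8α - 3) w`. Interpolating between the faces gives
`12·P₂ = 2(1 - x) u w + (1 - y) u w + y Q`, and `Q` splits in the same way into
`(1 - u) w + (8α - 4)(1 - v) w + (6 - 8α) v (1 - w)`; every product is non-negative on the box
exactly when `1/2 ≤ α ≤ 3/4`.
-/

lemma erk33_caseII_face_nonneg {α u v w : ℝ} (hα1 : 1/2 ≤ α) (hα2 : α ≤ 3/4)
    (hu1 : u ≤ 1) (hv0 : 0 ≤ v) (hv1 : v ≤ 1) (hw0 : 0 ≤ w) (hw1 : w ≤ 1) :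
    0 ≤ -u*w - 2*v*w + (6 - 8*α)*v + (8*α - 3)*w := by
  have hα : 0 ≤ 8*α - 4 := by linarith
  have hα' : 0 ≤ 6 - 8*α := by linarith
  calc (0 : ℝ)
      ≤ (1 - u)*w + (8*α - 4)*(1 - v)*w + (6 - 8*α)*v*(1 - w) := by
        have := sub_nonneg.2 hu1; have := sub_nonneg.2 hv1; have := sub_nonneg.2 hw1
        positivity
    _ = -u*w - 2*v*w + (6 - 8*α)*v + (8*α - 3)*w := by ring

theorem erk33_caseII_P2_nonneg_general (α : ℝ) (hα1 : 1/2 ≤ α) (hα2 : α ≤ 3/4)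
    (x y u v w : ℝ)
    (hx : x ∈ Set.Icc (0:ℝ) 1) (hy : y ∈ Set.Icc (0:ℝ) 1)
    (hu : u ∈ Set.Icc (0:ℝ) 1) (hv : v ∈ Set.Icc (0:ℝ) 1) (hw : w ∈ Set.Icc (0:ℝ) 1) :
    0 ≤ (3 - 2*x)*u*w - 2*u*w*y - 2*v*w*y - 8*α*v*y + 6*v*y + 8*α*w*y - 3*w*y := by
  obtain ⟨-, hx1⟩ := hx
  obtain ⟨hy0, hy1⟩ := hy
  obtain ⟨hu0, hu1⟩ := hu
  obtain ⟨hv0, hv1⟩ := hv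
  obtain ⟨hw0, hw1⟩ := hw
  have hQ := erk33_caseII_face_nonneg hα1 hα2 hu1 hv0 hv1 hw0 hw1
  calc (0 : ℝ)
      ≤ 2*(1 - x)*u*w + (1 - y)*u*w + y*(-u*w - 2*v*w + (6 - 8*α)*v + (8*α - 3)*w) := by
        have := sub_nonneg.2 hx1; have := sub_nonneg.2 hy1
        positivity
    _ = (3 - 2*x)*u*w - 2*u*w*y - 2*v*w*y - 8*α*v*y + 6*v*y + 8*α*w*y - 3*w*y := by ring

theorem erk33_caseII_P2_nonneg (α : ℝ) (hα1 : 1/2 ≤ α) (hα2 : α ≤ 3/4)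
    (x y z u v w : ℝ)
    (hx : x ∈ Set.Icc (0:ℝ) 1) (hy : y ∈ Set.Icc (0:ℝ) 1) (hz : z ∈ Set.Icc (0:ℝ) 1)
    (hu : u ∈ Set.Icc (0:ℝ) 1) (hv : v ∈ Set.Icc (0:ℝ) 1) (hw : w ∈ Set.Icc (0:ℝ) 1) :
    0 ≤ (3 - 2*x)*u*w - 2*u*w*y - 2*v*w*y - 8*α*v*y + 6*v*y + 8*α*w*y - 3*w*y :=
  erk33_caseII_P2_nonneg_general α hα1 hα2 x y u v w hx hy hu hv hw
end

section
/- For every α ∈ [1/2, 1] and all (x, y, z, u) ∈ [0, 1/2]⁴, the three polynomials P₋₁(x,y,z,u) = (u − y − 2α(yu + uz − y))/(2α), P₀(x,y,z,u) = (u(αx + 4αy + αz − 2) + 2(α − 2αy + y))/(2α), and P₁(x,y,z,u) = (u − y − 2α(xu + yu − y))/(2α) are all non-negative. -/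
/-!
Each numerator is affine in `u`, so it suffices to check it at `u = 0` and `u = 1/2`.
There it is a sum of products of the nonnegative quantities `2α - 1`, `1 - α`, `α` and the
variables or their distances to `1/2`; e.g. the numerator of `P₋₁` at `u = 1/2` is
`(1 - α)(1/2 - y) + α(1/2 - z)`.
-/

open Set

lemma nonneg_of_affine_of_endpoints {a b h u : ℝ} (hu : u ∈ Icc 0 h)
    (h₀ : 0 ≤ a) (h₁ : 0 ≤ a + b * h) : 0 ≤ a + b * u := by
  rcases hu.1.eq_or_lt with rfl | hu₀
  · simpa using h₀
  have hh : 0 < h := hu₀.trans_le hu.2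
  refine nonneg_of_mul_nonneg_right ?_ hh
  calc 0 ≤ (h - u) * a + u * (a + b * h) :=
        add_nonneg (mul_nonneg (sub_nonneg.2 hu.2) h₀) (mul_nonneg hu₀.le h₁)
    _ = h * (a + b * u) := by ring

lemma heat_erk22_side_numerator_nonneg {α y w u : ℝ} (hα1 : 1/2 ≤ α) (hα2 : α ≤ 1)
    (hy : y ∈ Icc (0:ℝ) (1/2)) (hu : u ∈ Icc (0:ℝ) (1/2)) (hw : w ≤ 1/2) :
    0 ≤ (2*α - 1) * y + (1 - 2*α*y - 2*α*w) * u := by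
  refine nonneg_of_affine_of_endpoints hu (mul_nonneg (by linarith) hy.1) ?_
  calc 0 ≤ (1 - α) * (1/2 - y) + α * (1/2 - w) :=
        add_nonneg (mul_nonneg (by linarith) (by linarith [hy.2]))
          (mul_nonneg (by linarith) (by linarith [hw]))
    _ = _ := by ring

lemma heat_erk22_centre_numerator_nonneg {α x y z u : ℝ} (hα1 : 1/2 ≤ α) (hα2 : α ≤ 1)
    (hy : y ∈ Icc (0:ℝ) (1/2)) (hu : u ∈ Icc (0:ℝ) (1/2)) (hx : 0 ≤ x) (hz : 0 ≤ z) :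
    0 ≤ 2 * (α * (1 - 2*y) + y) + (α*x + 4*α*y + α*z - 2) * u := by
  refine nonneg_of_affine_of_endpoints hu ?_ ?_
  · have : 0 ≤ α * (1 - 2*y) := mul_nonneg (by linarith) (by linarith [hy.2])
    linarith [hy.1]
  · calc 0 ≤ α * (x + z) / 2 + (2*α - 1) + 2 * y * (1 - α) := by
          have : 0 ≤ α * (x + z) := mul_nonneg (by linarith) (by linarith)
          have : 0 ≤ y * (1 - α) := mul_nonneg hy.1 (by linarith)
          linarith
      _ = _ := by ring

theorem heat_erk22_polys_nonneg (α : ℝ) (hα1 : 1/2 ≤ α) (hα2 : α ≤ 1)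
    (x y z u : ℝ)
    (hx : x ∈ Set.Icc (0:ℝ) (1/2)) (hy : y ∈ Set.Icc (0:ℝ) (1/2))
    (hz : z ∈ Set.Icc (0:ℝ) (1/2)) (hu : u ∈ Set.Icc (0:ℝ) (1/2)) :
    0 ≤ (u - y - 2*α*(y*u + u*z - y))/(2*α) ∧
    0 ≤ (u*(α*x + 4*α*y + α*z - 2) + 2*(α - 2*α*y + y))/(2*α) ∧
    0 ≤ (u - y - 2*α*(x*u + y*u - y))/(2*α) := by
  have h2α : 0 ≤ 2*α := by linarith
  have hleft := heat_erk22_side_numerator_nonneg hα1 hα2 hy hu hz.2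
  have hcentre := heat_erk22_centre_numerator_nonneg hα1 hα2 hy hu hx.1 hz.1
  have hright := heat_erk22_side_numerator_nonneg hα1 hα2 hy hu hx.2
  exact ⟨div_nonneg (by linarith) h2α, div_nonneg (by linarith) h2α,
    div_nonneg (by linarith) h2α⟩
end
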